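/- Let A be an n×n real symmetric matrix with zero diagonal (the adjacency matrix of a weighted graph), and let u, v, w, x be four distinct indices such that u, v, w are pendent vertices all attached to x: for each z ∈ {u,v,w}, A_{z,x} ≠ 0 and A_{z,y} = 0 for all y ≠ x. Then at least two of the three vertices u, v, w are sedentary, i.e., at least two of the quantities inf_{t>0} |exp(itA)_{u,u}|, inf_{t>0} |exp(itA)_{v,v}|, inf_{t>0} |exp(itA)_{w,w}| are strictly positive. This holds for every assignment of nonzero edge weights. -/

import Mathlib

/-!
Let `a, b, c` be the weights of the pendant edges at `u, v, w` and `s = a² + b² + c²`. The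
vectors supported on `{u, v, w}` and orthogonal to `(a, b, c)` lie in the kernel of `A`; the
orthogonal projection `P` onto them satisfies `A P = 0` and `P_uu = 1 - a² / s`. Hence
`U(t) P = P U(t) = P`, so `U(t) - P = (1 - P) U(t) (1 - P)`, whose `(u, u)` entry has modulus at
most `(1 - P)_uu = a² / s` by Cauchy–Schwarz, as `U(t)` is unitary. Thus
`|U(t)_uu| ≥ 1 - 2 a² / s > 0` whenever `2 a² < s`, and as the weights are nonzero this fails for
at most one of the three vertices.
-/

open Matrix
open scoped Kronecker

/-- Transition matrix `U(t) = exp(itA)` of the continuous-time quantum walk on the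
weighted graph with real symmetric adjacency matrix `A`. -/
noncomputable def transition {m : Type*} [Fintype m] [DecidableEq m]
    (A : Matrix m m ℝ) (t : ℝ) : Matrix m m ℂ :=
  NormedSpace.exp ((Complex.I * t) • A.map (fun x : ℝ => (x : ℂ)))

/-- A vertex `u` is sedentary if `inf_{t>0} |U(t)_{u,u}| > 0`. -/
noncomputable def Sedentary {m : Type*} [Fintype m] [DecidableEq m]
    (A : Matrix m m ℝ) (u : m) : Prop :=
  0 < ⨅ t : {t : ℝ // 0 < t}, ‖transition A t u u‖

/-- `E` is the orthogonal spectral projection of `A` for the eigenvalue `θ`: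
`E` is real symmetric, idempotent, and for every vector `v`, `A·v = θ·v ↔ E·v = v`. -/
def IsSpectralProj {m : Type*} [Fintype m] [DecidableEq m]
    (A : Matrix m m ℝ) (θ : ℝ) (E : Matrix m m ℝ) : Prop :=
  E.IsSymm ∧ E * E = E ∧ ∀ v : m → ℝ, A.mulVec v = θ • v ↔ E.mulVec v = v

open NormedSpace WithLp

namespace Matrix

variable {m : Type*} [Fintype m]

theorem map_ofReal_mul (A B : Matrix m m ℝ) :
    (A * B).map ((↑) : ℝ → ℂ) = A.map (↑) * B.map (↑) :=
  Matrix.map_mul (f := Complex.ofRealHom)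

theorem exp_semiconjBy [DecidableEq m] {M N P : Matrix m m ℂ} (h : SemiconjBy P M N) :
    SemiconjBy P (exp M) (exp N) := by
  -- `exp` only depends on the topology, so any Banach algebra norm unlocks `SemiconjBy.exp_right`.
  let : NormedRing (Matrix m m ℂ) := Matrix.linftyOpNormedRing
  let : NormedAlgebra ℂ (Matrix m m ℂ) := Matrix.linftyOpNormedAlgebra
  let : NormedAlgebra ℚ (Matrix m m ℂ) := NormedAlgebra.restrictScalars ℚ ℂ _
  exact h.exp_right

theorem norm_conjTranspose_mul_mul_apply_le [DecidableEq m] {n 𝕜 : Type*} [RCLike 𝕜]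
    {U : Matrix m m 𝕜} (hU : U ∈ unitaryGroup m 𝕜) (B : Matrix m n 𝕜) (i : n) :
    ‖(Bᴴ * U * B) i i‖ ≤ ‖(Bᴴ * B) i i‖ := by
  set b : EuclideanSpace 𝕜 m := toLp 2 (fun k => B k i)
  have hUb : ‖toEuclideanCLM (n := m) (𝕜 := 𝕜) U b‖ = ‖b‖ :=
    ContinuousLinearMap.norm_map_of_mem_unitary (Unitary.map_mem _ hU) b
  have hBUB : (Bᴴ * U * B) i i = inner 𝕜 b (toEuclideanCLM (n := m) (𝕜 := 𝕜) U b) := by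
    simp only [EuclideanSpace.inner_eq_star_dotProduct, Matrix.mul_assoc]
    simp [b, mul_apply, dotProduct, mulVec, mul_comm]
  have hBB : (Bᴴ * B) i i = (‖b‖ : 𝕜) ^ 2 := by
    rw [← inner_self_eq_norm_sq_to_K, EuclideanSpace.inner_eq_star_dotProduct]
    simp [b, mul_apply, dotProduct, mul_comm]
  calc ‖(Bᴴ * U * B) i i‖ ≤ ‖b‖ * ‖b‖ := by
        rw [hBUB]; exact (norm_inner_le_norm _ _).trans_eq (by rw [hUb])
    _ = ‖(Bᴴ * B) i i‖ := by simp [hBB, sq]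

theorem norm_apply_sub_apply_le_of_mem_unitaryGroup [DecidableEq m] {𝕜 : Type*} [RCLike 𝕜]
    {U P : Matrix m m 𝕜} (hU : U ∈ unitaryGroup m 𝕜) (hP : P.IsHermitian) (hPP : P * P = P)
    (hUP : U * P = P) (hPU : P * U = P) (i : m) : ‖U i i - P i i‖ ≤ ‖(1 - P) i i‖ := by
  have hR : (1 - P)ᴴ = 1 - P := by rw [conjTranspose_sub, conjTranspose_one, hP.eq]
  have hRUR : (1 - P)ᴴ * U * (1 - P) = U - P := by
    simp only [hR, sub_mul, mul_sub, one_mul, mul_one, hUP, hPU, hPP]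
    abel
  have hRR : (1 - P)ᴴ * (1 - P) = 1 - P := by
    simp only [hR, sub_mul, mul_sub, one_mul, mul_one, hPP]
    abel
  have := norm_conjTranspose_mul_mul_apply_le hU (1 - P) i
  rwa [hRUR, hRR, sub_apply] at this

theorem sub_smul_vecMulVec_mul_self {K : Type*} [Field K] {Q : Matrix m m K}
    {d : m → K} (hQ : Q * Q = Q) (hQd : Q *ᵥ d = d) (hdQ : d ᵥ* Q = d) :
    (Q - (d ⬝ᵥ d)⁻¹ • vecMulVec d d) * (Q - (d ⬝ᵥ d)⁻¹ • vecMulVec d d) =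
      Q - (d ⬝ᵥ d)⁻¹ • vecMulVec d d := by
  have hc : (d ⬝ᵥ d)⁻¹ * ((d ⬝ᵥ d)⁻¹ * (d ⬝ᵥ d)) = (d ⬝ᵥ d)⁻¹ := by
    rw [← mul_assoc]; simpa using mul_self_mul_inv (d ⬝ᵥ d)⁻¹
  have hQV : Q * vecMulVec d d = vecMulVec d d := by rw [mul_vecMulVec, hQd]
  have hVQ : vecMulVec d d * Q = vecMulVec d d := by rw [vecMulVec_mul, hdQ]
  have hVV : vecMulVec d d * vecMulVec d d = (d ⬝ᵥ d) • vecMulVec d d := by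
    rw [vecMulVec_mul_vecMulVec, vecMulVec_smul]
  simp only [sub_mul, mul_sub, smul_mul_assoc, mul_smul_comm, hQ, hQV, hVQ, hVV, smul_sub,
    smul_smul, hc]
  abel

end Matrix

section Transition

variable {m : Type*} [Fintype m] [DecidableEq m]

theorem transition_mem_unitaryGroup {A : Matrix m m ℝ} (hA : A.IsSymm) (t : ℝ) :
    transition A t ∈ unitaryGroup m ℂ := by
  set M := (Complex.I * t) • A.map ((↑) : ℝ → ℂ)
  have hM : Mᴴ = -M := by
    ext i j
    simp [M, hA.apply i j]
  rw [mem_unitaryGroup_iff', star_eq_conjTranspose, transition, ← exp_conjTranspose, hM,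
    ← exp_add_of_commute _ _ (Commute.refl M).neg_left, neg_add_cancel, exp_zero]

theorem transition_mul_eq_self {A P : Matrix m m ℝ} (h : A * P = 0) (t : ℝ) :
    transition A t * P.map (↑) = P.map (↑) := by
  have : SemiconjBy (P.map ((↑) : ℝ → ℂ)) 0 ((Complex.I * t) • A.map (↑)) := by
    rw [SemiconjBy, mul_zero, smul_mul_assoc, ← map_ofReal_mul]
    simp [h]
  simpa [SemiconjBy, transition] using (exp_semiconjBy this).symm

theorem mul_transition_eq_self {A P : Matrix m m ℝ} (h : P * A = 0) (t : ℝ) :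
    P.map (↑) * transition A t = P.map (↑) := by
  have : SemiconjBy (P.map ((↑) : ℝ → ℂ)) ((Complex.I * t) • A.map (↑)) 0 := by
    rw [SemiconjBy, zero_mul, mul_smul_comm, ← map_ofReal_mul]
    simp [h]
  simpa [SemiconjBy, transition] using exp_semiconjBy this

end Transition

theorem sedentary_of_mul_eq_zero {m : Type*} [Fintype m] [DecidableEq m] {A P : Matrix m m ℝ}
    (hA : A.IsSymm) (hP : P.IsSymm) (hPP : P * P = P) (hAP : A * P = 0) {u : m}
    (hu : 1 / 2 < P u u) : Sedentary A u := by
  have hPA : P * A = 0 := by rw [← hP.eq, ← hA.eq, ← transpose_mul, hAP, transpose_zero]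
  have hPc : (P.map ((↑) : ℝ → ℂ)).IsHermitian :=
    (isHermitian_iff_isSymm.mpr hP).map _ fun _ => (Complex.conj_ofReal _).symm
  have hPcPc : P.map ((↑) : ℝ → ℂ) * P.map (↑) = P.map (↑) := by rw [← map_ofReal_mul, hPP]
  have hbound (t : ℝ) : P u u - |1 - P u u| ≤ ‖transition A t u u‖ := by
    have hU := norm_apply_sub_apply_le_of_mem_unitaryGroup (transition_mem_unitaryGroup hA t) hPc
      hPcPc (transition_mul_eq_self hAP t) (mul_transition_eq_self hPA t) u
    have hR : ‖(1 - P.map ((↑) : ℝ → ℂ)) u u‖ = |1 - P u u| := by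
      rw [Matrix.sub_apply, one_apply_eq, map_apply, ← Complex.ofReal_one, ← Complex.ofReal_sub,
        Complex.norm_real, Real.norm_eq_abs]
    have hP : ‖P.map ((↑) : ℝ → ℂ) u u‖ = P u u := by
      rw [map_apply, Complex.norm_real, Real.norm_of_nonneg (by linarith)]
    linarith [norm_sub_norm_le (P.map ((↑) : ℝ → ℂ) u u) (transition A t u u),
      norm_sub_rev (P.map ((↑) : ℝ → ℂ) u u) (transition A t u u)]
  have : Nonempty {t : ℝ // 0 < t} := ⟨⟨1, one_pos⟩⟩
  refine lt_of_lt_of_le ?_ (le_ciInf fun t => hbound t)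
  rw [sub_pos, abs_sub_lt_iff]
  constructor <;> linarith

section Pendant

variable {m : Type*} [Fintype m] [DecidableEq m] (A : Matrix m m ℝ) (S : Finset m) (x : m)

def coordProj : Matrix m m ℝ := diagonal fun z => if z ∈ S then 1 else 0

def pendantWeights : m → ℝ := fun z => if z ∈ S then A z x else 0

/-- When every vertex of `S` is pendant at `x`, this is the orthogonal projection onto the
vectors supported on `S` and orthogonal to the weight vector; they all lie in the kernel of `A`. -/
noncomputable def pendantProj : Matrix m m ℝ :=
  coordProj S - (pendantWeights A S x ⬝ᵥ pendantWeights A S x)⁻¹ •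
    vecMulVec (pendantWeights A S x) (pendantWeights A S x)

theorem pendantWeights_dotProduct_self :
    pendantWeights A S x ⬝ᵥ pendantWeights A S x = ∑ z ∈ S, A z x ^ 2 := by
  simp [pendantWeights, dotProduct, sq, Finset.sum_ite_mem]

theorem coordProj_mulVec_pendantWeights :
    coordProj S *ᵥ pendantWeights A S x = pendantWeights A S x := by
  ext z
  by_cases hz : z ∈ S <;> simp [coordProj, pendantWeights, mulVec_diagonal, hz]

theorem pendantWeights_vecMul_coordProj :
    pendantWeights A S x ᵥ* coordProj S = pendantWeights A S x := by
  ext z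
  by_cases hz : z ∈ S <;> simp [coordProj, pendantWeights, vecMul_diagonal, hz]

theorem coordProj_mul_self : coordProj S * coordProj S = coordProj S := by
  rw [coordProj, diagonal_mul_diagonal]
  congr 1
  ext z
  split_ifs <;> simp

variable {A S x}

theorem mul_coordProj_eq_vecMulVec (hA : A.IsSymm) (hS : ∀ z ∈ S, ∀ y ≠ x, A z y = 0) :
    A * coordProj S = vecMulVec (Pi.single x 1) (pendantWeights A S x) := by
  ext i z
  by_cases hz : z ∈ S
  · by_cases hi : i = x
    · subst hi; simp [coordProj, pendantWeights, vecMulVec_apply, hz, hA.apply]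
    · simpa [coordProj, pendantWeights, vecMulVec_apply, hz, hi, ← hA.apply i z]
        using hS z hz i hi
  · simp [coordProj, pendantWeights, vecMulVec_apply, hz]

theorem mulVec_pendantWeights (hA : A.IsSymm) (hS : ∀ z ∈ S, ∀ y ≠ x, A z y = 0) :
    A *ᵥ pendantWeights A S x =
      (pendantWeights A S x ⬝ᵥ pendantWeights A S x) • Pi.single x 1 := by
  conv_lhs => rw [← coordProj_mulVec_pendantWeights]
  rw [mulVec_mulVec, mul_coordProj_eq_vecMulVec hA hS, vecMulVec_mulVec, op_smul_eq_smul]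

theorem mul_pendantProj_eq_zero (hA : A.IsSymm) (hS : ∀ z ∈ S, ∀ y ≠ x, A z y = 0) :
    A * pendantProj A S x = 0 := by
  rw [pendantProj, mul_sub, mul_smul_comm, mul_vecMulVec, mulVec_pendantWeights hA hS,
    mul_coordProj_eq_vecMulVec hA hS, smul_vecMulVec, smul_smul]
  rcases eq_or_ne (pendantWeights A S x ⬝ᵥ pendantWeights A S x) 0 with hd | hd
  · simp [dotProduct_self_eq_zero.mp hd]
  · rw [inv_mul_cancel₀ hd, one_smul, sub_self]

theorem pendantProj_isSymm : (pendantProj A S x).IsSymm :=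
  (isSymm_diagonal _).sub (IsSymm.smul (transpose_vecMulVec (pendantWeights A S x) _) _)

theorem pendantProj_mul_self : pendantProj A S x * pendantProj A S x = pendantProj A S x :=
  sub_smul_vecMulVec_mul_self (coordProj_mul_self S) (coordProj_mulVec_pendantWeights A S x)
    (pendantWeights_vecMul_coordProj A S x)

theorem pendantProj_apply_self {u : m} (hu : u ∈ S) :
    pendantProj A S x u u = 1 - A u x ^ 2 / ∑ z ∈ S, A z x ^ 2 := by
  rw [pendantProj, Matrix.sub_apply, Matrix.smul_apply, pendantWeights_dotProduct_self]
  simp [coordProj, pendantWeights, vecMulVec_apply, hu, div_eq_inv_mul, sq]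

theorem sedentary_of_two_mul_sq_lt_sum (hA : A.IsSymm) (hS : ∀ z ∈ S, ∀ y ≠ x, A z y = 0)
    {u : m} (hu : u ∈ S) (h : 2 * A u x ^ 2 < ∑ z ∈ S, A z x ^ 2) : Sedentary A u := by
  refine sedentary_of_mul_eq_zero hA pendantProj_isSymm pendantProj_mul_self
    (mul_pendantProj_eq_zero hA hS) ?_
  have hpos : 0 < ∑ z ∈ S, A z x ^ 2 := by nlinarith [sq_nonneg (A u x)]
  rw [pendantProj_apply_self hu, lt_sub_iff_add_lt, ← lt_sub_iff_add_lt', div_lt_iff₀ hpos]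
  linarith

end Pendant

theorem two_mul_lt_add_add_of_pos {a b c : ℝ} (ha : 0 < a) (hb : 0 < b) (hc : 0 < c) :
    (2 * a < a + b + c ∧ 2 * b < a + b + c) ∨ (2 * a < a + b + c ∧ 2 * c < a + b + c) ∨
      (2 * b < a + b + c ∧ 2 * c < a + b + c) := by
  rcases lt_or_ge (2 * a) (a + b + c) with h₁ | h₁ <;>
    rcases lt_or_ge (2 * b) (a + b + c) with h₂ | h₂
  · exact Or.inl ⟨h₁, h₂⟩
  · exact Or.inr (Or.inl ⟨h₁, by linarith⟩)
  · exact Or.inr (Or.inr ⟨h₂, by linarith⟩)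
  · linarith

theorem stmt12_general {n : ℕ} (A : Matrix (Fin n) (Fin n) ℝ) (hA : A.IsSymm)
    (u v w x : Fin n) (huv : u ≠ v) (huw : u ≠ w) (hvw : v ≠ w)
    (hu : A u x ≠ 0) (hupend : ∀ y : Fin n, y ≠ x → A u y = 0)
    (hv : A v x ≠ 0) (hvpend : ∀ y : Fin n, y ≠ x → A v y = 0)
    (hw : A w x ≠ 0) (hwpend : ∀ y : Fin n, y ≠ x → A w y = 0) :
    (Sedentary A u ∧ Sedentary A v) ∨ (Sedentary A u ∧ Sedentary A w) ∨
      (Sedentary A v ∧ Sedentary A w) := by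
  have hS : ∀ z ∈ ({u, v, w} : Finset (Fin n)), ∀ y ≠ x, A z y = 0 := by
    simp only [Finset.mem_insert, Finset.mem_singleton]
    rintro z (rfl | rfl | rfl)
    exacts [hupend, hvpend, hwpend]
  have hsum : ∑ z ∈ {u, v, w}, A z x ^ 2 = A u x ^ 2 + A v x ^ 2 + A w x ^ 2 := by
    rw [Finset.sum_insert (by simp [huv, huw]), Finset.sum_pair hvw, add_assoc]
  have hsed {z : Fin n} (hz : z ∈ ({u, v, w} : Finset (Fin n)))
      (h : 2 * A z x ^ 2 < A u x ^ 2 + A v x ^ 2 + A w x ^ 2) : Sedentary A z :=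
    sedentary_of_two_mul_sq_lt_sum hA hS hz (hsum ▸ h)
  rcases two_mul_lt_add_add_of_pos (by positivity : 0 < A u x ^ 2)
    (by positivity : 0 < A v x ^ 2) (by positivity : 0 < A w x ^ 2)
    with ⟨h₁, h₂⟩ | ⟨h₁, h₂⟩ | ⟨h₁, h₂⟩
  · exact Or.inl ⟨hsed (by simp) h₁, hsed (by simp) h₂⟩
  · exact Or.inr (Or.inl ⟨hsed (by simp) h₁, hsed (by simp) h₂⟩)
  · exact Or.inr (Or.inr ⟨hsed (by simp) h₁, hsed (by simp) h₂⟩)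

/-- if `u`, `v`, `w` are three pendent vertices all attached to the same
vertex `x`, then for every assignment of nonzero edge weights at least two of `u`, `v`, `w`
are sedentary. -/
theorem stmt12 {n : ℕ} (A : Matrix (Fin n) (Fin n) ℝ) (hA : A.IsSymm)
    (hdiag : ∀ i : Fin n, A i i = 0)
    (u v w x : Fin n) (huv : u ≠ v) (huw : u ≠ w) (hvw : v ≠ w)
    (hux : u ≠ x) (hvx : v ≠ x) (hwx : w ≠ x)
    (hu : A u x ≠ 0) (hupend : ∀ y : Fin n, y ≠ x → A u y = 0)
    (hv : A v x ≠ 0) (hvpend : ∀ y : Fin n, y ≠ x → A v y = 0)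
    (hw : A w x ≠ 0) (hwpend : ∀ y : Fin n, y ≠ x → A w y = 0) :
    (Sedentary A u ∧ Sedentary A v) ∨ (Sedentary A u ∧ Sedentary A w) ∨
      (Sedentary A v ∧ Sedentary A w) :=
  stmt12_general A hA u v w x huv huw hvw hu hupend hv hvpend hw hwpend
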